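/- arXiv:2409.14359 — 2 statements merged into one kernel-verified Lean document; each statement's English description precedes it below -/
import Mathlib

section
/- Let 𝔉 be a maximal commuting family of i-boxes in [a,b]. (i) If [x,y], [x',y] ∈ 𝔉 with x' ≤ x, then every i-box [x'',y] with x' ≤ x'' ≤ x belongs to 𝔉. (ii) If [x,y], [x,y'] ∈ 𝔉 with y ≤ y', then every i-box [x,y''] with y ≤ y'' ≤ y' belongs to 𝔉. -/
namespace IBoxes

variable {I : Type*}

/-- `gapBelow i x m` encodes `x₋ < m` : no position `t` with `m ≤ t < x` has the color of `x`. -/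
def gapBelow (i : ℤ → I) (x m : ℤ) : Prop := ∀ t : ℤ, m ≤ t → t < x → i t ≠ i x

/-- `gapAbove i y m` encodes `m < y₊` : no position `t` with `y < t ≤ m` has the color of `y`. -/
def gapAbove (i : ℤ → I) (y m : ℤ) : Prop := ∀ t : ℤ, y < t → t ≤ m → i t ≠ i y

/-- `[x,y]` is an `i`-box. -/
def IsBox (i : ℤ → I) (x y : ℤ) : Prop := x ≤ y ∧ i x = i y

/-- Two `i`-boxes commute: `(x₁)₋ < x₂ ≤ y₂ < (y₁)₊` or `(x₂)₋ < x₁ ≤ y₁ < (y₂)₊`. -/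
def BoxCommute (i : ℤ → I) (x₁ y₁ x₂ y₂ : ℤ) : Prop :=
  (gapBelow i x₁ x₂ ∧ gapAbove i y₁ y₂) ∨ (gapBelow i x₂ x₁ ∧ gapAbove i y₂ y₁)

/-- A commuting family of `i`-boxes. -/
def CommFamily (i : ℤ → I) (F : Set (ℤ × ℤ)) : Prop :=
  (∀ p ∈ F, IsBox i p.1 p.2) ∧ ∀ p ∈ F, ∀ q ∈ F, BoxCommute i p.1 p.2 q.1 q.2

/-- All boxes of the family lie in `[a,b]`. -/
def InRange (a b : ℤ) (F : Set (ℤ × ℤ)) : Prop := ∀ p ∈ F, a ≤ p.1 ∧ p.2 ≤ b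

/-- A maximal commuting family of `i`-boxes in `[a,b]`. -/
def MaxCommFamily (i : ℤ → I) (a b : ℤ) (F : Set (ℤ × ℤ)) : Prop :=
  CommFamily i F ∧ InRange a b F ∧
    ∀ G : Set (ℤ × ℤ), CommFamily i G → InRange a b G → F ⊆ G → F = G

/-- `x' = x₊`, the next position with the color of `x`. -/
def NextSame (i : ℤ → I) (x x' : ℤ) : Prop :=
  x < x' ∧ i x' = i x ∧ ∀ t : ℤ, x < t → t < x' → i t ≠ i x

/-- `y' = y₋`, the previous position with the color of `y`. -/
def PrevSame (i : ℤ → I) (y y' : ℤ) : Prop :=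
  y' < y ∧ i y' = i y ∧ ∀ t : ℤ, y' < t → t < y → i t ≠ i y

/-- `p` is frozen in `[a,b]` : `(p.1)₋ < a` and `b < (p.2)₊`. -/
def Frozen (i : ℤ → I) (a b : ℤ) (p : ℤ × ℤ) : Prop :=
  gapBelow i p.1 a ∧ gapAbove i p.2 b

/-- `p = [lo, hi}`, i.e. `p = [lo, hi(i lo)⁻]`. -/
def IsLBox (i : ℤ → I) (lo hi : ℤ) (p : ℤ × ℤ) : Prop :=
  p.1 = lo ∧ lo ≤ p.2 ∧ p.2 ≤ hi ∧ i p.2 = i lo ∧ ∀ t : ℤ, p.2 < t → t ≤ hi → i t ≠ i lo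

/-- `p = {lo, hi]`, i.e. `p = [lo(i hi)⁺, hi]`. -/
def IsRBox (i : ℤ → I) (lo hi : ℤ) (p : ℤ × ℤ) : Prop :=
  p.2 = hi ∧ lo ≤ p.1 ∧ p.1 ≤ hi ∧ i p.1 = i hi ∧ ∀ t : ℤ, lo ≤ t → t < p.1 → i t ≠ i hi

/-- An admissible chain of `i`-boxes `𝔠_k = box k` (for `1 ≤ k ≤ l`) with envelopes
`𝔠̃_k = [lo k, hi k]`. -/
structure AdmissibleChain (i : ℤ → I) (l : ℕ) where
  lo : ℕ → ℤ
  hi : ℕ → ℤ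
  box : ℕ → ℤ × ℤ
  size : ∀ k : ℕ, 1 ≤ k → k ≤ l → hi k = lo k + (k : ℤ) - 1
  step : ∀ k : ℕ, 1 ≤ k → k < l →
    (lo (k + 1) = lo k - 1 ∧ hi (k + 1) = hi k) ∨
    (lo (k + 1) = lo k ∧ hi (k + 1) = hi k + 1)
  box_spec : ∀ k : ℕ, 1 ≤ k → k ≤ l →
    IsLBox i (lo k) (hi k) (box k) ∨ IsRBox i (lo k) (hi k) (box k)
  cover : ∀ k : ℕ, 1 ≤ k → k ≤ l →
    Set.Icc (lo k) (hi k) = ⋃ j ∈ Set.Icc 1 k, Set.Icc ((box j).1) ((box j).2)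

/-- The set of boxes appearing in an admissible chain. -/
def boxesOf {i : ℤ → I} {l : ℕ} (C : AdmissibleChain i l) : Set (ℤ × ℤ) :=
  {p | ∃ k : ℕ, 1 ≤ k ∧ k ≤ l ∧ C.box k = p}

/-- The envelope `𝔠̃_k` as a set, with `𝔠̃_0 = ∅`. -/
def env {i : ℤ → I} {l : ℕ} (C : AdmissibleChain i l) (k : ℕ) : Set ℤ :=
  if k = 0 then ∅ else Set.Icc (C.lo k) (C.hi k)

/-- `z` is the effective end of the box `(x,y)` of the maximal commuting family `F` in `[a,b]`. -/
def IsEffectiveEnd (i : ℤ → I) (a b : ℤ) (F : Set (ℤ × ℤ)) (x y z : ℤ) : Prop :=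
  z ∈ ({x, y} : Set ℤ) ∧
    ∀ (l : ℕ) (C : AdmissibleChain i l), C.lo l = a → C.hi l = b → boxesOf C = F →
      ∀ k : ℕ, 1 ≤ k → k ≤ l → C.box k = (x, y) →
        ({z} : Set ℤ) = env C k \ env C (k - 1)

/-- `[x,y]` is in the left corner of `F`: `[x₊,y] ∈ F` and `[x,y₊] ∈ F`. -/
def LeftCorner (i : ℤ → I) (F : Set (ℤ × ℤ)) (x y : ℤ) : Prop :=
  (∃ x', NextSame i x x' ∧ (x', y) ∈ F) ∧ (∃ y', NextSame i y y' ∧ (x, y') ∈ F)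

/-- `[x,y]` is in the right corner of `F`: `[x,y₋] ∈ F` and `[x₋,y] ∈ F`. -/
def RightCorner (i : ℤ → I) (F : Set (ℤ × ℤ)) (x y : ℤ) : Prop :=
  (∃ y', PrevSame i y y' ∧ (x, y') ∈ F) ∧ (∃ x', PrevSame i x x' ∧ (x', y) ∈ F)

/-- The number of positions of color `j` in `[x,y]`. -/
noncomputable def colorCount (i : ℤ → I) (j : I) (x y : ℤ) : ℕ :=
  {s : ℤ | x ≤ s ∧ s ≤ y ∧ i s = j}.ncard

lemma boxCommute_symm {i : ℤ → I} {x₁ y₁ x₂ y₂ : ℤ} (h : BoxCommute i x₁ y₁ x₂ y₂) :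
    BoxCommute i x₂ y₂ x₁ y₁ := h.symm

lemma boxCommute_self {i : ℤ → I} (x y : ℤ) : BoxCommute i x y x y :=
  Or.inl ⟨fun t h1 h2 => absurd (h1.trans_lt h2) (lt_irrefl x),
          fun t h1 h2 => absurd (h1.trans_le h2) (lt_irrefl y)⟩

lemma commute_mid_left {i : ℤ → I} {x y x' x'' u v : ℤ}
    (hx : i x = i y) (hx'' : i x'' = i y)
    (h1 : x' ≤ x'') (h2 : x'' ≤ x)
    (hA : BoxCommute i x y u v) (hB : BoxCommute i x' y u v) :
    BoxCommute i x'' y u v := by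
  rcases hA with ⟨a1, a2⟩ | ⟨b1, b2⟩
  · exact Or.inl ⟨fun t ht1 ht2 hh =>
      a1 t ht1 (ht2.trans_le h2) (hh.trans (hx''.trans hx.symm)), a2⟩
  · rcases hB with ⟨c1, c2⟩ | ⟨d1, d2⟩
    · by_cases h : x'' < u
      · exact Or.inl ⟨fun t ht1 ht2 => absurd (ht1.trans_lt ht2) (not_lt.2 h.le), c2⟩
      · exact Or.inr ⟨fun t ht1 ht2 =>
          absurd (ht1.trans_lt ht2) (not_lt.2 (not_lt.1 h)), b2⟩
    · exact Or.inr ⟨fun t ht1 ht2 => d1 t (h1.trans ht1) ht2, d2⟩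

lemma commute_mid_right {i : ℤ → I} {x y y' y'' u v : ℤ}
    (hy : i x = i y) (hy'' : i x = i y'')
    (h1 : y ≤ y'') (h2 : y'' ≤ y')
    (hA : BoxCommute i x y u v) (hB : BoxCommute i x y' u v) :
    BoxCommute i x y'' u v := by
  rcases hA with ⟨a1, a2⟩ | ⟨b1, b2⟩
  · exact Or.inl ⟨a1, fun t ht1 ht2 hh =>
      a2 t (h1.trans_lt ht1) ht2 (hh.trans (hy''.symm.trans hy))⟩
  · rcases hB with ⟨c1, c2⟩ | ⟨d1, d2⟩
    · by_cases h : v ≤ y''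
      · exact Or.inl ⟨c1, fun t ht1 ht2 => absurd (ht1.trans_le ht2) (not_lt.2 h)⟩
      · exact Or.inr ⟨b1, fun t ht1 ht2 =>
          absurd (ht1.trans_le ht2) (not_lt.2 (not_le.1 h).le)⟩
    · exact Or.inr ⟨d1, fun t ht1 ht2 => d2 t ht1 (ht2.trans h2)⟩

/-- Boxes of `F` sharing an end with two nested boxes of `F` in between belong to `F`. -/
theorem middle_boxes_mem (i : ℤ → I) (a b : ℤ) (hab : a ≤ b)
    (F : Set (ℤ × ℤ)) (hF : MaxCommFamily i a b F) :
    (∀ x y x' x'' : ℤ, (x, y) ∈ F → (x', y) ∈ F → x' ≤ x →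
      x' ≤ x'' → x'' ≤ x → IsBox i x'' y → (x'', y) ∈ F) ∧
    (∀ x y y' y'' : ℤ, (x, y) ∈ F → (x, y') ∈ F → y ≤ y' →
      y ≤ y'' → y'' ≤ y' → IsBox i x y'' → (x, y'') ∈ F) := by
  obtain ⟨⟨hbox, hcomm⟩, hrange, hmax⟩ := hF
  constructor
  · intro x y x' x'' hxy hx'y hle hl1 hl2 hb
    have hGcomm : CommFamily i (insert (x'', y) F) := by
      constructor
      · intro p hp
        rcases Set.mem_insert_iff.1 hp with rfl | hp
        · exact hb
        · exact hbox p hp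
      · intro p hp q hq
        rcases Set.mem_insert_iff.1 hp with rfl | hp <;>
          rcases Set.mem_insert_iff.1 hq with rfl | hq
        · exact boxCommute_self _ _
        · exact commute_mid_left (hbox _ hxy).2 hb.2 hl1 hl2
            (hcomm _ hxy _ hq) (hcomm _ hx'y _ hq)
        · exact boxCommute_symm (commute_mid_left (hbox _ hxy).2 hb.2 hl1 hl2
            (hcomm _ hxy _ hp) (hcomm _ hx'y _ hp))
        · exact hcomm _ hp _ hq
    have hGrange : InRange a b (insert (x'', y) F) := by
      intro p hp
      rcases Set.mem_insert_iff.1 hp with rfl | hp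
      · exact ⟨(hrange _ hx'y).1.trans hl1, (hrange _ hxy).2⟩
      · exact hrange _ hp
    have := hmax _ hGcomm hGrange (Set.subset_insert _ _)
    rw [this]
    exact Set.mem_insert _ _
  · intro x y y' y'' hxy hxy' hle hl1 hl2 hb
    have hGcomm : CommFamily i (insert (x, y'') F) := by
      constructor
      · intro p hp
        rcases Set.mem_insert_iff.1 hp with rfl | hp
        · exact hb
        · exact hbox p hp
      · intro p hp q hq
        rcases Set.mem_insert_iff.1 hp with rfl | hp <;>
          rcases Set.mem_insert_iff.1 hq with rfl | hq
        · exact boxCommute_self _ _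
        · exact commute_mid_right (hbox _ hxy).2 hb.2 hl1 hl2
            (hcomm _ hxy _ hq) (hcomm _ hxy' _ hq)
        · exact boxCommute_symm (commute_mid_right (hbox _ hxy).2 hb.2 hl1 hl2
            (hcomm _ hxy _ hp) (hcomm _ hxy' _ hp))
        · exact hcomm _ hp _ hq
    have hGrange : InRange a b (insert (x, y'') F) := by
      intro p hp
      rcases Set.mem_insert_iff.1 hp with rfl | hp
      · exact ⟨(hrange _ hxy).1, hl2.trans (hrange _ hxy').2⟩
      · exact hrange _ hp
    have := hmax _ hGcomm hGrange (Set.subset_insert _ _)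
    rw [this]
    exact Set.mem_insert _ _

end IBoxes
end

section
/- Let 𝔉 be a maximal commuting family of i-boxes in [a,b] and [x,y] ∈ 𝔉. Then: (i) x is the effective end of [x,y] if and only if x = y or [x₊,y] ∈ 𝔉; (ii) y is the effective end of [x,y] if and only if x = y or [x,y₋] ∈ 𝔉. -/
namespace IBoxes

variable {I : Type*}

section Aux

variable {i : ℤ → I} {l : ℕ}

lemma env_zero (C : AdmissibleChain i l) : env C 0 = ∅ := by simp [env]

lemma env_of_pos (C : AdmissibleChain i l) {k : ℕ} (hk : 1 ≤ k) :
    env C k = Set.Icc (C.lo k) (C.hi k) := by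
  simp [env, Nat.one_le_iff_ne_zero.mp hk]

lemma env_succ_mono (C : AdmissibleChain i l) {k : ℕ} (hk1 : 1 ≤ k) (hkl : k < l) :
    env C k ⊆ env C (k + 1) := by
  rw [env_of_pos C hk1, env_of_pos C (by omega)]
  rcases C.step k hk1 hkl with ⟨h1, h2⟩ | ⟨h1, h2⟩ <;>
    exact Set.Icc_subset_Icc (by omega) (by omega)

lemma env_mono (C : AdmissibleChain i l) {j k : ℕ} (hjk : j ≤ k) (hkl : k ≤ l) :
    env C j ⊆ env C k := by
  induction k with
  | zero => simp_all
  | succ n ih =>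
    rcases Nat.lt_or_ge j (n + 1) with h | h
    · rcases Nat.eq_zero_or_pos n with rfl | hn
      · interval_cases j
        · simp [env_zero]
      · exact (ih (by omega) (by omega)).trans (env_succ_mono C hn (by omega))
    · have : j = n + 1 := le_antisymm hjk h
      subst this; rfl

lemma box_subset_env (C : AdmissibleChain i l) {j k : ℕ} (hj1 : 1 ≤ j) (hjk : j ≤ k)
    (hkl : k ≤ l) : Set.Icc (C.box j).1 (C.box j).2 ⊆ env C k := by
  rw [env_of_pos C (hj1.trans hjk), C.cover k (hj1.trans hjk) hkl]
  exact Set.subset_biUnion_of_mem (u := fun j => Set.Icc ((C.box j).1) ((C.box j).2))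
    (show j ∈ Set.Icc 1 k from ⟨hj1, hjk⟩)

lemma newpoint (C : AdmissibleChain i l) {k : ℕ} (hk1 : 1 ≤ k) (hkl : k ≤ l) :
    ∃ z : ℤ, env C k \ env C (k - 1) = {z} ∧ (z = C.lo k ∨ z = C.hi k) ∧
      z ∈ Set.Icc (C.box k).1 (C.box k).2 := by
  obtain ⟨m, rfl⟩ : ∃ m, k = m + 1 := ⟨k - 1, by omega⟩
  have hdiff : ∃ z : ℤ, env C (m + 1) \ env C m = {z} ∧ (z = C.lo (m + 1) ∨ z = C.hi (m + 1)) := by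
    rcases Nat.eq_zero_or_pos m with rfl | hm
    · refine ⟨C.lo 1, ?_, Or.inl rfl⟩
      have hs := C.size 1 le_rfl hkl
      rw [env_zero, env_of_pos C le_rfl, Set.diff_empty]
      have : C.hi 1 = C.lo 1 := by omega
      rw [this, Set.Icc_self]
    · have hsz := C.size m hm (by omega)
      have hlohi : C.lo m ≤ C.hi m := by omega
      rw [env_of_pos C (by omega), env_of_pos C hm]
      rcases C.step m hm (by omega) with ⟨h1, h2⟩ | ⟨h1, h2⟩
      · refine ⟨C.lo (m + 1), ?_, Or.inl rfl⟩
        ext t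
        simp only [Set.mem_diff, Set.mem_Icc, Set.mem_singleton_iff, not_and, not_le]
        omega
      · refine ⟨C.hi (m + 1), ?_, Or.inr rfl⟩
        ext t
        simp only [Set.mem_diff, Set.mem_Icc, Set.mem_singleton_iff, not_and, not_le]
        omega
  obtain ⟨z, hz, hz2⟩ := hdiff
  have hzmem : z ∈ env C (m + 1) \ env C m := hz ▸ rfl
  refine ⟨z, by simpa using hz, hz2, ?_⟩
  -- z lies in the interval of box (m+1)
  have hcov := C.cover (m + 1) (by omega) hkl
  have : z ∈ ⋃ j ∈ Set.Icc 1 (m + 1), Set.Icc ((C.box j).1) ((C.box j).2) := by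
    rw [← hcov, ← env_of_pos C (by omega : 1 ≤ m + 1)]
    exact hzmem.1
  simp only [Set.mem_iUnion, Set.mem_Icc, exists_prop] at this
  obtain ⟨j, ⟨hj1, hj2⟩, hjz⟩ := this
  rcases Nat.lt_or_ge j (m + 1) with hj | hj
  · exfalso
    exact hzmem.2 (box_subset_env C hj1 (by omega) (by omega) hjz)
  · have : j = m + 1 := le_antisymm hj2 hj
    subst this; exact hjz

lemma forced_left (C : AdmissibleChain i l) {k m : ℕ} {x y x' : ℤ}
    (hk1 : 1 ≤ k) (hkl : k ≤ l) (hbk : C.box k = (x, y))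
    (hm1 : 1 ≤ m) (hml : m ≤ l) (hbm : C.box m = (x', y))
    (hxx' : x < x') (hx'y : x' ≤ y) (hxy : x ≤ y) :
    env C k \ env C (k - 1) = {x} := by
  obtain ⟨z, hz, hz2, hz3⟩ := newpoint C hk1 hkl
  rw [hbk] at hz3
  have hmk : m ≠ k := by
    intro h; rw [h, hbk] at hbm
    exact absurd (congrArg Prod.fst hbm).symm (by simpa using hxx'.ne')
  rcases Nat.lt_or_ge m k with hmlt | hmge
  · -- m < k : the box [x', y] is already in env (k-1)
    have hsub : Set.Icc x' y ⊆ env C (k - 1) := by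
      have := box_subset_env C hm1 (show m ≤ k - 1 by omega) (show k - 1 ≤ l by omega)
      rwa [hbm] at this
    have hzd : z ∈ env C k \ env C (k - 1) := hz ▸ rfl
    have hznot : z ∉ Set.Icc x' y := fun h => hzd.2 (hsub h)
    have hbox : Set.Icc x y ⊆ env C k := by
      have := box_subset_env C hk1 le_rfl hkl; rwa [hbk] at this
    rw [env_of_pos C hk1] at hbox
    have hx1 : C.lo k ≤ x := (hbox ⟨le_rfl, hxy⟩).1
    have hy1 : y ≤ C.hi k := (hbox ⟨hxy, le_rfl⟩).2
    have hzx : z = x := by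
      simp only [Set.mem_Icc, not_and, not_le] at hznot hz3
      rcases hz2 with h | h <;> omega
    rw [hz, hzx]
  · -- k < m : impossible
    exfalso
    have hklt : k ≤ m - 1 := by omega
    obtain ⟨w, hw, _, hw3⟩ := newpoint C hm1 hml
    rw [hbm] at hw3
    have hwd : w ∈ env C m \ env C (m - 1) := hw ▸ rfl
    have hbox : Set.Icc x y ⊆ env C k := by
      have := box_subset_env C hk1 le_rfl hkl; rwa [hbk] at this
    have : Set.Icc x y ⊆ env C (m - 1) :=
      hbox.trans (env_mono C hklt (by omega))
    exact hwd.2 (this ⟨hxx'.le.trans hw3.1, hw3.2⟩)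

lemma forced_right (C : AdmissibleChain i l) {k m : ℕ} {x y y' : ℤ}
    (hk1 : 1 ≤ k) (hkl : k ≤ l) (hbk : C.box k = (x, y))
    (hm1 : 1 ≤ m) (hml : m ≤ l) (hbm : C.box m = (x, y'))
    (hy'y : y' < y) (hxy' : x ≤ y') (hxy : x ≤ y) :
    env C k \ env C (k - 1) = {y} := by
  obtain ⟨z, hz, hz2, hz3⟩ := newpoint C hk1 hkl
  rw [hbk] at hz3
  have hmk : m ≠ k := by
    intro h; rw [h, hbk] at hbm
    exact absurd (congrArg Prod.snd hbm).symm (by simpa using hy'y.ne)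
  rcases Nat.lt_or_ge m k with hmlt | hmge
  · have hsub : Set.Icc x y' ⊆ env C (k - 1) := by
      have := box_subset_env C hm1 (show m ≤ k - 1 by omega) (show k - 1 ≤ l by omega)
      rwa [hbm] at this
    have hzd : z ∈ env C k \ env C (k - 1) := hz ▸ rfl
    have hznot : z ∉ Set.Icc x y' := fun h => hzd.2 (hsub h)
    have hbox : Set.Icc x y ⊆ env C k := by
      have := box_subset_env C hk1 le_rfl hkl; rwa [hbk] at this
    rw [env_of_pos C hk1] at hbox
    have hx1 : C.lo k ≤ x := (hbox ⟨le_rfl, hxy⟩).1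
    have hy1 : y ≤ C.hi k := (hbox ⟨hxy, le_rfl⟩).2
    have hzy : z = y := by
      simp only [Set.mem_Icc, not_and, not_le] at hznot hz3
      rcases hz2 with h | h <;> omega
    rw [hz, hzy]
  · exfalso
    have hklt : k ≤ m - 1 := by omega
    obtain ⟨w, hw, _, hw3⟩ := newpoint C hm1 hml
    rw [hbm] at hw3
    have hwd : w ∈ env C m \ env C (m - 1) := hw ▸ rfl
    have hbox : Set.Icc x y ⊆ env C k := by
      have := box_subset_env C hk1 le_rfl hkl; rwa [hbk] at this
    have : Set.Icc x y ⊆ env C (m - 1) :=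
      hbox.trans (env_mono C hklt (by omega))
    exact hwd.2 (this ⟨hw3.1, hw3.2.trans hy'y.le⟩)

lemma forced_single (C : AdmissibleChain i l) {k : ℕ} {x : ℤ}
    (hk1 : 1 ≤ k) (hkl : k ≤ l) (hbk : C.box k = (x, x)) :
    env C k \ env C (k - 1) = {x} := by
  obtain ⟨z, hz, _, hz3⟩ := newpoint C hk1 hkl
  rw [hbk] at hz3
  simp only [Set.mem_Icc] at hz3
  have : z = x := le_antisymm hz3.2 hz3.1
  rw [hz, this]

end Aux


section Dichotomy

lemma boxCommute_self_s11 (i : ℤ → I) (u v : ℤ) : BoxCommute i u v u v :=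
  Or.inl ⟨fun _ h1 h2 => absurd (h1.trans_lt h2) (lt_irrefl _),
          fun _ h1 h2 => absurd (h1.trans_le h2) (lt_irrefl _)⟩

lemma boxCommute_symm_s11 {i : ℤ → I} {x1 y1 x2 y2 : ℤ} :
    BoxCommute i x1 y1 x2 y2 → BoxCommute i x2 y2 x1 y1 := Or.symm

lemma frozenL_commute (i : ℤ → I) {a b m : ℤ} (hm : i m = i a)
    (hmax : ∀ t, m < t → t ≤ b → i t ≠ i a) {p q : ℤ} (hp : a ≤ p) (hq : q ≤ b) :
    BoxCommute i a m p q :=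
  Or.inl ⟨fun t h1 h2 => absurd (hp.trans h1) (not_le.mpr h2),
          fun t h1 h2 hc => hmax t h1 (h2.trans hq) (hc.trans hm)⟩

lemma frozenR_commute (i : ℤ → I) {a b m : ℤ} (hm : i m = i b)
    (hmin : ∀ t, a ≤ t → t < m → i t ≠ i b) {p q : ℤ} (hp : a ≤ p) (hq : q ≤ b) :
    BoxCommute i m b p q :=
  Or.inl ⟨fun t h1 h2 hc => hmin t (hp.trans h1) h2 (hc.trans hm),
          fun t h1 h2 => absurd (h1.trans_le (h2.trans hq)) (lt_irrefl _)⟩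

/-- a maximal family contains the frozen box `[a, b(i a)⁻]`. -/
lemma maxF_left (i : ℤ → I) (a b : ℤ) (F : Set (ℤ × ℤ)) (hF : MaxCommFamily i a b F)
    (hab : a ≤ b) :
    ∃ m, a ≤ m ∧ m ≤ b ∧ i m = i a ∧ (∀ t, m < t → t ≤ b → i t ≠ i a) ∧ (a, m) ∈ F := by
  classical
  obtain ⟨⟨hboxes, hcomm⟩, hrange, hmax⟩ := hF
  set S := (Finset.Icc a b).filter (fun t => i t = i a) with hS
  have haS : a ∈ S := by simp [hS, hab]
  set m := S.max' ⟨a, haS⟩ with hm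
  have hmmem := S.max'_mem ⟨a, haS⟩
  simp only [hS, Finset.mem_filter, Finset.mem_Icc] at hmmem
  have hmaxm : ∀ t, m < t → t ≤ b → i t ≠ i a := by
    intro t h1 h2 hc
    have htS : t ∈ S := by
      simp only [hS, Finset.mem_filter, Finset.mem_Icc]
      exact ⟨⟨hmmem.1.1.trans h1.le, h2⟩, hc⟩
    exact absurd (S.le_max' t htS) (not_le.mpr h1)
  refine ⟨m, hmmem.1.1, hmmem.1.2, hmmem.2, hmaxm, ?_⟩
  have hcm : ∀ p ∈ F, BoxCommute i a m p.1 p.2 := fun p hp =>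
    frozenL_commute i hmmem.2 hmaxm (hrange p hp).1 (hrange p hp).2
  have hG : F = insert (a, m) F := by
    apply hmax
    · constructor
      · rintro p (rfl | hp)
        · exact ⟨hmmem.1.1, hmmem.2.symm⟩
        · exact hboxes _ hp
      · rintro p (rfl | hp) q (rfl | hq)
        · exact boxCommute_self_s11 i a m
        · exact hcm _ hq
        · exact boxCommute_symm_s11 (hcm _ hp)
        · exact hcomm _ hp _ hq
    · rintro p (rfl | hp)
      · exact ⟨le_rfl, hmmem.1.2⟩
      · exact hrange _ hp
    · exact Set.subset_insert _ _
  rw [hG]; exact Set.mem_insert _ _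

/-- a maximal family contains the frozen box `[a(i b)⁺, b]`. -/
lemma maxF_right (i : ℤ → I) (a b : ℤ) (F : Set (ℤ × ℤ)) (hF : MaxCommFamily i a b F)
    (hab : a ≤ b) :
    ∃ m, a ≤ m ∧ m ≤ b ∧ i m = i b ∧ (∀ t, a ≤ t → t < m → i t ≠ i b) ∧ (m, b) ∈ F := by
  classical
  obtain ⟨⟨hboxes, hcomm⟩, hrange, hmax⟩ := hF
  set S := (Finset.Icc a b).filter (fun t => i t = i b) with hS
  have hbS : b ∈ S := by simp [hS, hab]
  set m := S.min' ⟨b, hbS⟩ with hm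
  have hmmem := S.min'_mem ⟨b, hbS⟩
  simp only [hS, Finset.mem_filter, Finset.mem_Icc] at hmmem
  have hminm : ∀ t, a ≤ t → t < m → i t ≠ i b := by
    intro t h1 h2 hc
    have htS : t ∈ S := by
      simp only [hS, Finset.mem_filter, Finset.mem_Icc]
      exact ⟨⟨h1, h2.le.trans hmmem.1.2⟩, hc⟩
    exact absurd (S.min'_le t htS) (not_le.mpr h2)
  refine ⟨m, hmmem.1.1, hmmem.1.2, hmmem.2, hminm, ?_⟩
  have hcm : ∀ p ∈ F, BoxCommute i m b p.1 p.2 := fun p hp =>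
    frozenR_commute i hmmem.2 hminm (hrange p hp).1 (hrange p hp).2
  have hG : F = insert (m, b) F := by
    apply hmax
    · constructor
      · rintro p (rfl | hp)
        · exact ⟨hmmem.1.2, hmmem.2⟩
        · exact hboxes _ hp
      · rintro p (rfl | hp) q (rfl | hq)
        · exact boxCommute_self_s11 i m b
        · exact hcm _ hq
        · exact boxCommute_symm_s11 (hcm _ hp)
        · exact hcomm _ hp _ hq
    · rintro p (rfl | hp)
      · exact ⟨hmmem.1.1, le_rfl⟩
      · exact hrange _ hp
    · exact Set.subset_insert _ _
  rw [hG]; exact Set.mem_insert _ _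

lemma dichotomy (i : ℤ → I) (a b : ℤ) (F : Set (ℤ × ℤ)) (hF : MaxCommFamily i a b F)
    {x y : ℤ} (hxy : (x, y) ∈ F) (hlt : x < y) :
    (∃ x', NextSame i x x' ∧ (x', y) ∈ F) ∨ (∃ y', PrevSame i y y' ∧ (x, y') ∈ F) := by
  classical
  obtain ⟨⟨hboxes, hcomm⟩, hrange, hmax⟩ := hF
  have hixy : i x = i y := (hboxes _ hxy).2
  have hax : a ≤ x := (hrange _ hxy).1
  have hyb : y ≤ b := (hrange _ hxy).2
  -- x' = next occurrence of the color of x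
  set S1 := (Finset.Ioc x y).filter (fun t => i t = i x) with hS1
  have hyS1 : y ∈ S1 := by simp [hS1, hlt, hixy.symm]
  set x' := S1.min' ⟨y, hyS1⟩ with hx'def
  have hx'mem := S1.min'_mem ⟨y, hyS1⟩
  simp only [hS1, Finset.mem_filter, Finset.mem_Ioc] at hx'mem
  obtain ⟨⟨hxx', hx'y⟩, hix'⟩ := hx'mem
  have hnext : NextSame i x x' := by
    refine ⟨hxx', hix', fun t h1 h2 hc => ?_⟩
    have htS : t ∈ S1 := by
      simp only [hS1, Finset.mem_filter, Finset.mem_Ioc]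
      exact ⟨⟨h1, (h2.le.trans hx'y)⟩, hc⟩
    exact absurd (S1.min'_le t htS) (not_le.mpr h2)
  -- y' = previous occurrence of the color of y
  set S2 := (Finset.Ico x y).filter (fun t => i t = i y) with hS2
  have hxS2 : x ∈ S2 := by simp [hS2, hlt, hixy]
  set y' := S2.max' ⟨x, hxS2⟩ with hy'def
  have hy'mem := S2.max'_mem ⟨x, hxS2⟩
  simp only [hS2, Finset.mem_filter, Finset.mem_Ico] at hy'mem
  obtain ⟨⟨hxy', hy'y⟩, hiy'⟩ := hy'mem
  have hprev : PrevSame i y y' := by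
    refine ⟨hy'y, hiy', fun t h1 h2 hc => ?_⟩
    have htS : t ∈ S2 := by
      simp only [hS2, Finset.mem_filter, Finset.mem_Ico]
      exact ⟨⟨hxy'.trans h1.le, h2⟩, hc⟩
    exact absurd (S2.le_max' t htS) (not_le.mpr h1)
  by_cases hL : ∀ p ∈ F, BoxCommute i x' y p.1 p.2
  · left
    refine ⟨x', hnext, ?_⟩
    have hG : F = insert (x', y) F := by
      apply hmax
      · constructor
        · rintro p (rfl | hp)
          · exact ⟨hx'y, hix'.trans hixy⟩
          · exact hboxes _ hp
        · rintro p (rfl | hp) q (rfl | hq)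
          · exact boxCommute_self_s11 i x' y
          · exact hL _ hq
          · exact boxCommute_symm_s11 (hL _ hp)
          · exact hcomm _ hp _ hq
      · rintro p (rfl | hp)
        · exact ⟨hax.trans hxx'.le, hyb⟩
        · exact hrange _ hp
      · exact Set.subset_insert _ _
    rw [hG]; exact Set.mem_insert _ _
  by_cases hR : ∀ p ∈ F, BoxCommute i x y' p.1 p.2
  · right
    refine ⟨y', hprev, ?_⟩
    have hG : F = insert (x, y') F := by
      apply hmax
      · constructor
        · rintro p (rfl | hp)
          · exact ⟨hxy', hixy.trans hiy'.symm⟩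
          · exact hboxes _ hp
        · rintro p (rfl | hp) q (rfl | hq)
          · exact boxCommute_self_s11 i x y'
          · exact hR _ hq
          · exact boxCommute_symm_s11 (hR _ hp)
          · exact hcomm _ hp _ hq
      · rintro p (rfl | hp)
        · exact ⟨hax, hy'y.le.trans hyb⟩
        · exact hrange _ hp
      · exact Set.subset_insert _ _
    rw [hG]; exact Set.mem_insert _ _
  exfalso
  push_neg at hL hR
  obtain ⟨⟨u, v⟩, huv, hnc1⟩ := hL
  obtain ⟨⟨p, q⟩, hpq, hnc2⟩ := hR
  -- analyze (u,v)
  have hE1 : gapBelow i x u ∧ gapAbove i y v := by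
    rcases hcomm _ hxy _ huv with h | h
    · exact h
    · exact absurd (Or.inr ⟨fun t h1 h2 => h.1 t (hxx'.le.trans h1) h2, h.2⟩) hnc1
  have hngB : ¬ gapBelow i x' u := fun h => hnc1 (Or.inl ⟨h, hE1.2⟩)
  have hux : u ≤ x := by
    unfold gapBelow at hngB
    push_neg at hngB
    obtain ⟨t, h1, h2, h3⟩ := hngB
    rcases lt_trichotomy t x with h | h | h
    · exact absurd (h3.trans hix') (hE1.1 t h1 h)
    · exact h ▸ h1
    · exact absurd (h3.trans hix') (hnext.2.2 t h h2)
  have hs1 : ∃ s, v < s ∧ s ≤ y ∧ i s = i v := by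
    have hngA : ¬ gapAbove i v y := by
      intro h
      exact hnc1 (Or.inr ⟨fun t h1 h2 => absurd (((hux.trans_lt hxx').trans_le h1).trans h2)
        (lt_irrefl u), h⟩)
    unfold gapAbove at hngA
    push_neg at hngA
    obtain ⟨s, h1, h2, h3⟩ := hngA
    exact ⟨s, h1, h2, h3⟩
  -- analyze (p,q)
  have hE1' : gapBelow i x p ∧ gapAbove i y q := by
    rcases hcomm _ hxy _ hpq with h | h
    · exact h
    · exact absurd (Or.inr ⟨h.1, fun t h1 h2 => h.2 t h1 (h2.trans hy'y.le)⟩) hnc2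
  have hngA' : ¬ gapAbove i y' q := fun h => hnc2 (Or.inl ⟨hE1'.1, h⟩)
  have hyq : y ≤ q := by
    unfold gapAbove at hngA'
    push_neg at hngA'
    obtain ⟨t, h1, h2, h3⟩ := hngA'
    rcases lt_trichotomy t y with h | h | h
    · exact absurd (h3.trans hiy') (hprev.2.2 t h1 h)
    · exact h ▸ h2
    · exact absurd (h3.trans hiy') (hE1'.2 t h h2)
  have hs2 : ∃ s, x ≤ s ∧ s < p ∧ i s = i p := by
    have hngB' : ¬ gapBelow i p x := by
      intro h
      refine hnc2 (Or.inr ⟨h, fun t h1 h2 => absurd ((h2.trans_lt hy'y).trans_le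
        (hyq.trans h1.le)) (lt_irrefl t)⟩)
    unfold gapBelow at hngB'
    push_neg at hngB'
    obtain ⟨s, h1, h2, h3⟩ := hngB'
    exact ⟨s, h1, h2, h3⟩
  -- (u,v) and (p,q) cannot commute
  obtain ⟨s1, hs11, hs12, hs13⟩ := hs1
  obtain ⟨s2, hs21, hs22, hs23⟩ := hs2
  rcases hcomm _ huv _ hpq with h | h
  · exact h.2 s1 hs11 (hs12.trans hyq) hs13
  · exact h.1 s2 (hux.trans hs21) hs22 hs23

end Dichotomy


section Existence

lemma extendL (i : ℤ → I) {n : ℕ} (C' : AdmissibleChain i (n + 1)) {a b m : ℤ}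
    (hlo' : C'.lo (n + 1) = a + 1) (hhi' : C'.hi (n + 1) = b)
    (hb : b = a + ((n : ℤ) + 1)) (ham : a ≤ m) (hmb : m ≤ b) (him : i m = i a)
    (hmmax : ∀ t, m < t → t ≤ b → i t ≠ i a) :
    ∃ C : AdmissibleChain i (n + 2), C.lo (n + 2) = a ∧ C.hi (n + 2) = b ∧
      boxesOf C = insert (a, m) (boxesOf C') := by
  refine ⟨⟨fun k => if k = n + 2 then a else C'.lo k,
          fun k => if k = n + 2 then b else C'.hi k,
          fun k => if k = n + 2 then (a, m) else C'.box k, ?_, ?_, ?_, ?_⟩, ?_, ?_, ?_⟩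
  · -- size
    intro k h1 h2
    by_cases hk : k = n + 2
    · subst hk; simp only [if_pos rfl, if_true]; push_cast; omega
    · simp only [if_neg hk]
      exact C'.size k h1 (by omega)
  · -- step
    intro k h1 h2
    by_cases hk : k + 1 = n + 2
    · have hk' : k = n + 1 := by omega
      subst hk'
      left
      constructor
      · simp only [if_pos rfl, if_true, if_neg (show n + 1 ≠ n + 2 by omega), hlo']; ring
      · simp only [if_pos rfl, if_true, if_neg (show n + 1 ≠ n + 2 by omega), hhi']
    · simp only [if_neg hk, if_neg (show k ≠ n + 2 by omega)]
      exact C'.step k h1 (by omega)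
  · -- box_spec
    intro k h1 h2
    by_cases hk : k = n + 2
    · subst hk
      left
      simp only [if_pos rfl, if_true]
      exact ⟨rfl, ham, hmb, him, fun t ht1 ht2 => hmmax t ht1 ht2⟩
    · simp only [if_neg hk]
      exact C'.box_spec k h1 (by omega)
  · -- cover
    intro k h1 h2
    by_cases hk : k = n + 2
    · subst hk
      simp only [if_pos rfl, if_true]
      have hcov' := C'.cover (n + 1) (by omega) le_rfl
      rw [hlo', hhi'] at hcov'
      ext t
      simp only [Set.mem_Icc, Set.mem_iUnion, exists_prop]
      constructor
      · rintro ⟨hta, htb⟩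
        rcases eq_or_lt_of_le hta with h | h
        · refine ⟨n + 2, ⟨by omega, le_rfl⟩, ?_⟩
          simp only [if_pos rfl, if_true]
          exact ⟨by omega, by omega⟩
        · have ht : t ∈ ⋃ j ∈ Set.Icc 1 (n + 1), Set.Icc ((C'.box j).1) ((C'.box j).2) := by
            rw [← hcov']; exact Set.mem_Icc.mpr ⟨by omega, htb⟩
          simp only [Set.mem_iUnion, Set.mem_Icc, exists_prop] at ht
          obtain ⟨j, ⟨hj1, hj2⟩, hjt⟩ := ht
          refine ⟨j, ⟨hj1, by omega⟩, ?_⟩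
          simp only [if_neg (show j ≠ n + 2 by omega)]
          exact hjt
      · rintro ⟨j, ⟨hj1, hj2⟩, hjt⟩
        by_cases hj : j = n + 2
        · subst hj
          simp only [if_pos rfl, if_true] at hjt
          exact ⟨hjt.1, hjt.2.trans hmb⟩
        · simp only [if_neg hj] at hjt
          have ht : t ∈ Set.Icc (a + 1) b := by
            rw [hcov']
            simp only [Set.mem_iUnion, Set.mem_Icc, exists_prop]
            exact ⟨j, ⟨hj1, by omega⟩, hjt⟩
          rw [Set.mem_Icc] at ht
          exact ⟨by omega, ht.2⟩
    · simp only [if_neg hk]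
      rw [C'.cover k h1 (by omega)]
      apply Set.iUnion₂_congr
      intro j hj
      rw [if_neg (show j ≠ n + 2 by have := (Set.mem_Icc.mp hj).2; omega)]
  · simp
  · simp
  · ext p
    simp only [boxesOf, Set.mem_setOf_eq, Set.mem_insert_iff]
    constructor
    · rintro ⟨k, h1, h2, hbk⟩
      by_cases hk : k = n + 2
      · subst hk; simp only [if_pos rfl, if_true] at hbk; exact Or.inl hbk.symm
      · right
        refine ⟨k, h1, by omega, ?_⟩
        simpa only [if_neg hk] using hbk
    · rintro (rfl | ⟨k, h1, h2, hbk⟩)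
      · exact ⟨n + 2, by omega, le_rfl, by simp⟩
      · exact ⟨k, h1, by omega, by simp only [if_neg (show k ≠ n + 2 by omega)]; exact hbk⟩

lemma extendR (i : ℤ → I) {n : ℕ} (C' : AdmissibleChain i (n + 1)) {a b m : ℤ}
    (hlo' : C'.lo (n + 1) = a) (hhi' : C'.hi (n + 1) = b - 1)
    (hb : b = a + ((n : ℤ) + 1)) (ham : a ≤ m) (hmb : m ≤ b) (him : i m = i b)
    (hmmin : ∀ t, a ≤ t → t < m → i t ≠ i b) :
    ∃ C : AdmissibleChain i (n + 2), C.lo (n + 2) = a ∧ C.hi (n + 2) = b ∧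
      boxesOf C = insert (m, b) (boxesOf C') := by
  refine ⟨⟨fun k => if k = n + 2 then a else C'.lo k,
          fun k => if k = n + 2 then b else C'.hi k,
          fun k => if k = n + 2 then (m, b) else C'.box k, ?_, ?_, ?_, ?_⟩, ?_, ?_, ?_⟩
  · intro k h1 h2
    by_cases hk : k = n + 2
    · subst hk; simp only [if_pos rfl, if_true]; push_cast; omega
    · simp only [if_neg hk]
      exact C'.size k h1 (by omega)
  · intro k h1 h2
    by_cases hk : k + 1 = n + 2
    · have hk' : k = n + 1 := by omega
      subst hk'
      right
      constructor
      · simp only [if_pos rfl, if_true, if_neg (show n + 1 ≠ n + 2 by omega), hlo']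
      · simp only [if_pos rfl, if_true, if_neg (show n + 1 ≠ n + 2 by omega), hhi']; ring
    · simp only [if_neg hk, if_neg (show k ≠ n + 2 by omega)]
      exact C'.step k h1 (by omega)
  · intro k h1 h2
    by_cases hk : k = n + 2
    · subst hk
      right
      simp only [if_pos rfl, if_true]
      exact ⟨rfl, ham, hmb, him, fun t ht1 ht2 => hmmin t ht1 ht2⟩
    · simp only [if_neg hk]
      exact C'.box_spec k h1 (by omega)
  · intro k h1 h2
    by_cases hk : k = n + 2
    · subst hk
      simp only [if_pos rfl, if_true]
      have hcov' := C'.cover (n + 1) (by omega) le_rfl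
      rw [hlo', hhi'] at hcov'
      ext t
      simp only [Set.mem_Icc, Set.mem_iUnion, exists_prop]
      constructor
      · rintro ⟨hta, htb⟩
        rcases eq_or_lt_of_le htb with h | h
        · refine ⟨n + 2, ⟨by omega, le_rfl⟩, ?_⟩
          simp only [if_pos rfl, if_true]
          exact ⟨by omega, by omega⟩
        · have ht : t ∈ ⋃ j ∈ Set.Icc 1 (n + 1), Set.Icc ((C'.box j).1) ((C'.box j).2) := by
            rw [← hcov']; exact Set.mem_Icc.mpr ⟨hta, by omega⟩
          simp only [Set.mem_iUnion, Set.mem_Icc, exists_prop] at ht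
          obtain ⟨j, ⟨hj1, hj2⟩, hjt⟩ := ht
          refine ⟨j, ⟨hj1, by omega⟩, ?_⟩
          simp only [if_neg (show j ≠ n + 2 by omega)]
          exact hjt
      · rintro ⟨j, ⟨hj1, hj2⟩, hjt⟩
        by_cases hj : j = n + 2
        · subst hj
          simp only [if_pos rfl, if_true] at hjt
          exact ⟨ham.trans hjt.1, hjt.2⟩
        · simp only [if_neg hj] at hjt
          have ht : t ∈ Set.Icc a (b - 1) := by
            rw [hcov']
            simp only [Set.mem_iUnion, Set.mem_Icc, exists_prop]
            exact ⟨j, ⟨hj1, by omega⟩, hjt⟩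
          rw [Set.mem_Icc] at ht
          exact ⟨ht.1, by omega⟩
    · simp only [if_neg hk]
      rw [C'.cover k h1 (by omega)]
      apply Set.iUnion₂_congr
      intro j hj
      rw [if_neg (show j ≠ n + 2 by have := (Set.mem_Icc.mp hj).2; omega)]
  · simp
  · simp
  · ext p
    simp only [boxesOf, Set.mem_setOf_eq, Set.mem_insert_iff]
    constructor
    · rintro ⟨k, h1, h2, hbk⟩
      by_cases hk : k = n + 2
      · subst hk; simp only [if_pos rfl, if_true] at hbk; exact Or.inl hbk.symm
      · right
        refine ⟨k, h1, by omega, ?_⟩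
        simpa only [if_neg hk] using hbk
    · rintro (rfl | ⟨k, h1, h2, hbk⟩)
      · exact ⟨n + 2, by omega, le_rfl, by simp⟩
      · exact ⟨k, h1, by omega, by simp only [if_neg (show k ≠ n + 2 by omega)]; exact hbk⟩

lemma exists_chain (i : ℤ → I) : ∀ (n : ℕ) (a b : ℤ), b = a + (n : ℤ) →
    ∀ F : Set (ℤ × ℤ), MaxCommFamily i a b F →
    ∃ C : AdmissibleChain i (n + 1), C.lo (n + 1) = a ∧ C.hi (n + 1) = b ∧ boxesOf C = F := by
  intro n
  induction n with
  | zero =>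
    intro a b hb F hF
    have hba : b = a := by push_cast at hb; omega
    subst hba
    have hsub : ∀ p ∈ F, p = (b, b) := by
      intro p hp
      have h1 := hF.2.1 p hp
      have h2 := (hF.1.1 p hp).1
      have : p.1 = b ∧ p.2 = b := ⟨by omega, by omega⟩
      exact Prod.ext this.1 this.2
    have hmem : (b, b) ∈ F := by
      have hG : F = insert (b, b) F := by
        apply hF.2.2
        · constructor
          · rintro p (rfl | hp)
            · exact ⟨le_rfl, rfl⟩
            · exact hF.1.1 p hp
          · intro p hp q hq
            have hp' : p = (b, b) := by
              rcases hp with rfl | h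
              · rfl
              · exact hsub p h
            have hq' : q = (b, b) := by
              rcases hq with rfl | h
              · rfl
              · exact hsub q h
            rw [hp', hq']
            exact boxCommute_self_s11 i b b
        · rintro p (rfl | hp)
          · exact ⟨le_rfl, le_rfl⟩
          · exact hF.2.1 p hp
        · exact Set.subset_insert _ _
      rw [hG]; exact Set.mem_insert _ _
    refine ⟨⟨fun _ => b, fun _ => b, fun _ => (b, b), ?_, ?_, ?_, ?_⟩, rfl, rfl, ?_⟩
    · intro k h1 h2
      have : k = 1 := by omega
      subst this; simp
    · intro k h1 h2; omega
    · intro k h1 h2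
      exact Or.inl ⟨rfl, le_rfl, le_rfl, rfl, fun t ht1 ht2 => absurd (ht1.trans_le ht2)
        (lt_irrefl b)⟩
    · intro k h1 h2
      have : k = 1 := by omega
      subst this
      ext t
      simp only [Set.mem_Icc, Set.mem_iUnion, exists_prop]
      constructor
      · intro h
        exact ⟨1, ⟨le_rfl, le_rfl⟩, h.1, h.2⟩
      · rintro ⟨j, _, hj⟩
        exact hj
    · ext p
      simp only [boxesOf, Set.mem_setOf_eq]
      constructor
      · rintro ⟨k, _, _, rfl⟩
        exact hmem
      · intro hp
        exact ⟨1, le_rfl, le_rfl, (hsub p hp).symm⟩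
  | succ n ih =>
    intro a b hb F hF
    have hab : a < b := by push_cast at hb; omega
    obtain ⟨m, ham, hmb, him, hmmax, hmF⟩ := maxF_left i a b F hF hab.le
    obtain ⟨m', ham', hm'b, him', hm'min, hm'F⟩ := maxF_right i a b F hF hab.le
    have key : (∀ p ∈ F, p.1 = a → p = (a, m)) ∨ (∀ p ∈ F, p.2 = b → p = (m', b)) := by
      by_contra h
      push_neg at h
      obtain ⟨⟨p₁, hp1F, hp1a, hp1ne⟩, ⟨p₂, hp2F, hq2b, hp2ne⟩⟩ := h
      have hbox1 := hF.1.1 p₁ hp1F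
      have hbox2 := hF.1.1 p₂ hp2F
      have hr1 := hF.2.1 p₁ hp1F
      have hr2 := hF.2.1 p₂ hp2F
      -- p₁ = (a, q₁) with q₁ < m
      have hq1m : p₁.2 < m := by
        rcases lt_trichotomy p₁.2 m with h' | h' | h'
        · exact h'
        · exact absurd (Prod.ext hp1a h') hp1ne
        · exact absurd (hp1a ▸ hbox1.2.symm : i p₁.2 = i a) (hmmax p₁.2 h' hr1.2)
      -- p₂ = (p, b) with p > m'
      have hp2m : m' < p₂.1 := by
        rcases lt_trichotomy p₂.1 m' with h' | h' | h'
        · exact absurd (hq2b ▸ hbox2.2 : i p₂.1 = i b) (hm'min p₂.1 hr2.1 h')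
        · exact absurd (Prod.ext h' hq2b) hp2ne
        · exact h'
      rcases hF.1.2 p₁ hp1F p₂ hp2F with ⟨h1, h2⟩ | ⟨h1, h2⟩
      · exact h2 m hq1m (hq2b ▸ hmb) (him.trans (hp1a ▸ hbox1.2.symm : i p₁.2 = i a).symm)
      · exact h1 m' (hp1a ▸ ham') hp2m (him'.trans (hq2b ▸ hbox2.2 : i p₂.1 = i b).symm)
    rcases key with hkey | hkey
    · -- remove (a, m), recurse on [a+1, b]
      set F' := F \ {(a, m)} with hF'def
      have hF'max : MaxCommFamily i (a + 1) b F' := by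
        refine ⟨⟨fun p hp => hF.1.1 p hp.1, fun p hp q hq => hF.1.2 p hp.1 q hq.1⟩, ?_, ?_⟩
        · intro p hp
          refine ⟨?_, (hF.2.1 p hp.1).2⟩
          rcases eq_or_lt_of_le (hF.2.1 p hp.1).1 with h | h
          · exact absurd (hkey p hp.1 h.symm) hp.2
          · omega
        · intro G hGc hGr hsub
          have hFG : F = insert (a, m) G := by
            apply hF.2.2
            · constructor
              · rintro p (rfl | hp)
                · exact ⟨ham, him.symm⟩
                · exact hGc.1 p hp
              · rintro p (rfl | hp) q (rfl | hq)
                · exact boxCommute_self_s11 i a m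
                · exact frozenL_commute i him hmmax (by linarith [(hGr q hq).1])
                    (hGr q hq).2
                · exact boxCommute_symm_s11 (frozenL_commute i him hmmax
                    (by linarith [(hGr p hp).1]) (hGr p hp).2)
                · exact hGc.2 p hp q hq
            · rintro p (rfl | hp)
              · exact ⟨le_rfl, hmb⟩
              · exact ⟨by linarith [(hGr p hp).1], (hGr p hp).2⟩
            · intro p hp
              by_cases hpm : p = (a, m)
              · exact hpm ▸ Set.mem_insert _ _
              · exact Set.mem_insert_of_mem _ (hsub ⟨hp, hpm⟩)
          ext p
          constructor
          · exact fun hp => hsub hp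
          · intro hp
            refine ⟨?_, ?_⟩
            · rw [hFG]; exact Set.mem_insert_of_mem _ hp
            · intro hpe
              rw [Set.mem_singleton_iff] at hpe
              have := (hGr p hp).1
              rw [hpe] at this
              exact absurd this (show ¬a + 1 ≤ a by omega)
      have hb' : b = (a + 1) + (n : ℤ) := by push_cast at hb ⊢; omega
      obtain ⟨C', hlo', hhi', hbox'⟩ := ih (a + 1) b hb' F' hF'max
      obtain ⟨C, hClo, hChi, hCbox⟩ := extendL i C' hlo' hhi' (by push_cast at hb ⊢; omega)
        ham hmb him hmmax
      refine ⟨C, hClo, hChi, ?_⟩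
      rw [hCbox, hbox', hF'def, Set.insert_diff_singleton, Set.insert_eq_self.mpr hmF]
    · -- remove (m', b), recurse on [a, b-1]
      set F' := F \ {(m', b)} with hF'def
      have hF'max : MaxCommFamily i a (b - 1) F' := by
        refine ⟨⟨fun p hp => hF.1.1 p hp.1, fun p hp q hq => hF.1.2 p hp.1 q hq.1⟩, ?_, ?_⟩
        · intro p hp
          refine ⟨(hF.2.1 p hp.1).1, ?_⟩
          rcases eq_or_lt_of_le (hF.2.1 p hp.1).2 with h | h
          · exact absurd (hkey p hp.1 h) hp.2
          · omega
        · intro G hGc hGr hsub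
          have hFG : F = insert (m', b) G := by
            apply hF.2.2
            · constructor
              · rintro p (rfl | hp)
                · exact ⟨hm'b, him'⟩
                · exact hGc.1 p hp
              · rintro p (rfl | hp) q (rfl | hq)
                · exact boxCommute_self_s11 i m' b
                · exact frozenR_commute i him' hm'min (hGr q hq).1
                    (by linarith [(hGr q hq).2])
                · exact boxCommute_symm_s11 (frozenR_commute i him' hm'min (hGr p hp).1
                    (by linarith [(hGr p hp).2]))
                · exact hGc.2 p hp q hq
            · rintro p (rfl | hp)
              · exact ⟨ham', le_rfl⟩
              · exact ⟨(hGr p hp).1, by linarith [(hGr p hp).2]⟩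
            · intro p hp
              by_cases hpm : p = (m', b)
              · exact hpm ▸ Set.mem_insert _ _
              · exact Set.mem_insert_of_mem _ (hsub ⟨hp, hpm⟩)
          ext p
          constructor
          · exact fun hp => hsub hp
          · intro hp
            refine ⟨?_, ?_⟩
            · rw [hFG]; exact Set.mem_insert_of_mem _ hp
            · intro hpe
              rw [Set.mem_singleton_iff] at hpe
              have := (hGr p hp).2
              rw [hpe] at this
              exact absurd this (show ¬b ≤ b - 1 by omega)
      have hb' : b - 1 = a + (n : ℤ) := by push_cast at hb ⊢; omega
      obtain ⟨C', hlo', hhi', hbox'⟩ := ih a (b - 1) hb' F' hF'max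
      obtain ⟨C, hClo, hChi, hCbox⟩ := extendR i C' hlo' hhi' (by push_cast at hb ⊢; omega)
        ham' hm'b him' hm'min
      refine ⟨C, hClo, hChi, ?_⟩
      rw [hCbox, hbox', hF'def, Set.insert_diff_singleton, Set.insert_eq_self.mpr hm'F]

end Existence

/-- `x` (resp. `y`) is the effective end of `[x,y] ∈ F` iff `x = y` or `[x₊,y] ∈ F`
(resp. `x = y` or `[x,y₋] ∈ F`). -/
theorem effectiveEnd_iff_neighbor (i : ℤ → I) (a b : ℤ) (hab : a ≤ b)
    (F : Set (ℤ × ℤ)) (hF : MaxCommFamily i a b F) (x y : ℤ) (hxy : (x, y) ∈ F) :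
    (IsEffectiveEnd i a b F x y x ↔ (x = y ∨ ∃ x', NextSame i x x' ∧ (x', y) ∈ F)) ∧
    (IsEffectiveEnd i a b F x y y ↔ (x = y ∨ ∃ y', PrevSame i y y' ∧ (x, y') ∈ F)) := by
  have hbox := hF.1.1 _ hxy
  have hxley : x ≤ y := hbox.1
  have hchain : ∃ C : AdmissibleChain i ((b - a).toNat + 1),
      C.lo ((b - a).toNat + 1) = a ∧ C.hi ((b - a).toNat + 1) = b ∧ boxesOf C = F :=
    exists_chain i (b - a).toNat a b (by omega) F hF
  constructor
  · constructor
    · intro hEff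
      by_contra hcon
      push_neg at hcon
      obtain ⟨hne, hnx⟩ := hcon
      have hlt : x < y := lt_of_le_of_ne hxley hne
      rcases dichotomy i a b F hF hxy hlt with h | h
      · obtain ⟨x', h1, h2⟩ := h
        exact hnx x' h1 h2
      · obtain ⟨y', hprev, hy'F⟩ := h
        obtain ⟨C, hClo, hChi, hCbox⟩ := hchain
        have hxyC : (x, y) ∈ boxesOf C := hCbox ▸ hxy
        obtain ⟨k, hk1, hkl, hbk⟩ := hxyC
        have h1 := hEff.2 _ C hClo hChi hCbox k hk1 hkl hbk
        have hy'C : (x, y') ∈ boxesOf C := hCbox ▸ hy'F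
        obtain ⟨m, hm1, hml, hbm⟩ := hy'C
        have h2 := forced_right C hk1 hkl hbk hm1 hml hbm hprev.1 (hF.1.1 _ hy'F).1 hxley
        exact hne (Set.singleton_eq_singleton_iff.mp (h1.trans h2))
    · intro h
      refine ⟨Set.mem_insert _ _, ?_⟩
      intro l C hClo hChi hCb k hk1 hkl hbk
      rcases h with rfl | ⟨x', hnext, hx'F⟩
      · exact (forced_single C hk1 hkl hbk).symm
      · have hx'C : (x', y) ∈ boxesOf C := hCb ▸ hx'F
        obtain ⟨m, hm1, hml, hbm⟩ := hx'C
        exact (forced_left C hk1 hkl hbk hm1 hml hbm hnext.1 (hF.1.1 _ hx'F).1 hxley).symm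
  · constructor
    · intro hEff
      by_contra hcon
      push_neg at hcon
      obtain ⟨hne, hny⟩ := hcon
      have hlt : x < y := lt_of_le_of_ne hxley hne
      rcases dichotomy i a b F hF hxy hlt with h | h
      · obtain ⟨x', hnext, hx'F⟩ := h
        obtain ⟨C, hClo, hChi, hCbox⟩ := hchain
        have hxyC : (x, y) ∈ boxesOf C := hCbox ▸ hxy
        obtain ⟨k, hk1, hkl, hbk⟩ := hxyC
        have h1 := hEff.2 _ C hClo hChi hCbox k hk1 hkl hbk
        have hx'C : (x', y) ∈ boxesOf C := hCbox ▸ hx'F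
        obtain ⟨m, hm1, hml, hbm⟩ := hx'C
        have h2 := forced_left C hk1 hkl hbk hm1 hml hbm hnext.1 (hF.1.1 _ hx'F).1 hxley
        exact hne (Set.singleton_eq_singleton_iff.mp (h1.trans h2)).symm
      · obtain ⟨y', h1, h2⟩ := h
        exact hny y' h1 h2
    · intro h
      refine ⟨Set.mem_insert_iff.mpr (Or.inr rfl), ?_⟩
      intro l C hClo hChi hCb k hk1 hkl hbk
      rcases h with rfl | ⟨y', hprev, hy'F⟩
      · exact (forced_single C hk1 hkl hbk).symm
      · have hy'C : (x, y') ∈ boxesOf C := hCb ▸ hy'F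
        obtain ⟨m, hm1, hml, hbm⟩ := hy'C
        exact (forced_right C hk1 hkl hbk hm1 hml hbm hprev.1 (hF.1.1 _ hy'F).1 hxley).symm

end IBoxes
end
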